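/- Let p : G₁ → G₂ be a surjective homomorphism of abelian groups and i : N → G₂ a homomorphism of commutative monoids. Then the group completion of the pullback monoid G₁ ×_{G₂} N is naturally isomorphic to the pullback of groups G₁ ×_{G₂} N^gp, where N^gp → G₂ is induced by i. -/

import Mathlib

/- A group completion `ι : M →* G` is a localization of `M` at `⊤`: `ι a = ι b` iff `c * a = c * b`
for some `c`, and every element of `G` has the form `ι a / ι b`. Both facts follow from the
universal property by testing against `ℚ/ℤ`-valued characters. The map `(g, n) ↦ (g, ιN n)` from
`G₁ ×_{G₂} N` to `G₁ ×_{G₂} N^gp` has the same two properties because `p` is surjective: a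
witness `c` of `ιN a = ιN b`, or a denominator `n₂` of an element of `N^gp`, lifts to the
pullback as `(t, c)` resp. `(t, n₂)` with `p t = i c` resp. `p t = i n₂`. Two localizations of
the same monoid at `⊤` are isomorphic compatibly with the localization maps. -/

/-- `ι : M →* G` realizes the commutative group `G` as the group completion of the
commutative monoid `M`. -/
def IsGroupCompletion {M G : Type*} [CommMonoid M] [CommGroup G] (ι : M →* G) : Prop :=
  ∀ (H : Type*) [CommGroup H] (f : M →* H), ∃! g : G →* H, g.comp ι = f

/-- The pullback monoid `G₁ ×_{G₂} N` of `p : G₁ →* G₂` and `i : N →* G₂`, as a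
submonoid of `G₁ × N`. -/
def pullbackSubmonoid {G₁ G₂ N : Type*} [CommGroup G₁] [CommGroup G₂] [CommMonoid N]
    (p : G₁ →* G₂) (i : N →* G₂) : Submonoid (G₁ × N) where
  carrier := {x | p x.1 = i x.2}
  one_mem' := by simp
  mul_mem' := by
    intro a b ha hb
    simp only [Set.mem_setOf_eq, Prod.fst_mul, Prod.snd_mul, map_mul] at *
    rw [ha, hb]

/-- The pullback group `G₁ ×_{G₂} H` of `p : G₁ →* G₂` and `φ : H →* G₂`, as a
subgroup of `G₁ × H`. -/
def pullbackSubgroup {G₁ G₂ H : Type*} [CommGroup G₁] [CommGroup G₂] [CommGroup H]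
    (p : G₁ →* G₂) (φ : H →* G₂) : Subgroup (G₁ × H) where
  carrier := {x | p x.1 = φ x.2}
  one_mem' := by simp
  mul_mem' := by
    intro a b ha hb
    simp only [Set.mem_setOf_eq, Prod.fst_mul, Prod.snd_mul, map_mul] at *
    rw [ha, hb]
  inv_mem' := by
    intro a ha
    simp only [Set.mem_setOf_eq, Prod.fst_inv, Prod.snd_inv, map_inv] at *
    rw [ha]

open Algebra

theorem CommGroup.exists_hom_addCircle_ne_one {G : Type*} [CommGroup G] {x : G} (hx : x ≠ 1) :
    ∃ χ : G →* Multiplicative (AddCircle (1 : ℚ)), χ x ≠ 1 := by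
  obtain ⟨c, hc⟩ := CharacterModule.exists_character_apply_ne_zero_of_ne_zero
    (A := Additive G) (a := Additive.ofMul x) hx
  exact ⟨AddMonoidHom.toMultiplicativeRight c, hc⟩

theorem Algebra.GrothendieckGroup.lift_comp_of {M G : Type*} [CommMonoid M] [CommGroup G]
    (f : M →* G) : (lift f).comp of = f := by
  rw [← lift_symm_apply, Equiv.symm_apply_apply]

theorem Algebra.GrothendieckGroup.lift_of {M G : Type*} [CommMonoid M] [CommGroup G]
    (f : M →* G) (m : M) : lift f (of m) = f m :=
  DFunLike.congr_fun (lift_comp_of f) m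

namespace IsGroupCompletion

variable {M G : Type*} [CommMonoid M] [CommGroup G] {ι : M →* G}

/- `IsGroupCompletion ι` only quantifies over targets in one fixed universe. Characters into
`ℚ/ℤ` can be lifted to that universe and separate points, which makes the universal property
usable for targets in any universe. -/

theorem exists_comp_eq_hom_addCircle (hι : IsGroupCompletion ι)
    (χ : M →* Multiplicative (AddCircle (1 : ℚ))) :
    ∃ ψ : G →* Multiplicative (AddCircle (1 : ℚ)), ψ.comp ι = χ := by
  obtain ⟨g, hg, -⟩ := hι (ULift _) (MulEquiv.ulift.symm.toMonoidHom.comp χ)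
  refine ⟨MulEquiv.ulift.toMonoidHom.comp g, ?_⟩
  rw [MonoidHom.comp_assoc, hg]
  rfl

theorem hom_addCircle_ext (hι : IsGroupCompletion ι)
    {ψ₁ ψ₂ : G →* Multiplicative (AddCircle (1 : ℚ))} (h : ψ₁.comp ι = ψ₂.comp ι) : ψ₁ = ψ₂ := by
  obtain ⟨_, -, huniq⟩ := hι _ (MulEquiv.ulift.symm.toMonoidHom.comp (ψ₂.comp ι))
  have hup := (huniq (MulEquiv.ulift.symm.toMonoidHom.comp ψ₁)
    ((MonoidHom.comp_assoc ..).trans (congrArg _ h))).trans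
      (huniq (MulEquiv.ulift.symm.toMonoidHom.comp ψ₂) (MonoidHom.comp_assoc ..)).symm
  ext x
  exact congrArg ULift.down (DFunLike.congr_fun hup x)

theorem hom_ext (hι : IsGroupCompletion ι) {H : Type*} [CommGroup H]
    {f₁ f₂ : G →* H} (h : f₁.comp ι = f₂.comp ι) : f₁ = f₂ := by
  ext x
  by_contra hne
  obtain ⟨χ, hχ⟩ := CommGroup.exists_hom_addCircle_ne_one (div_ne_one.mpr hne)
  have hχf : χ.comp f₁ = χ.comp f₂ :=
    hι.hom_addCircle_ext (by rw [MonoidHom.comp_assoc, h, MonoidHom.comp_assoc])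
  exact hχ (by rw [map_div, div_eq_one]; exact DFunLike.congr_fun hχf x)

theorem lift_injective (hι : IsGroupCompletion ι) :
    Function.Injective (GrothendieckGroup.lift ι) := by
  refine (injective_iff_map_eq_one _).mpr fun x hx => ?_
  by_contra hne
  obtain ⟨χ, hχ⟩ := CommGroup.exists_hom_addCircle_ne_one hne
  obtain ⟨ψ, hψ⟩ := hι.exists_comp_eq_hom_addCircle (χ.comp GrothendieckGroup.of)
  have hχψ : χ = ψ.comp (GrothendieckGroup.lift ι) :=
    GrothendieckGroup.lift.symm.injective <| by
      rw [GrothendieckGroup.lift_symm_apply, GrothendieckGroup.lift_symm_apply,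
        MonoidHom.comp_assoc, GrothendieckGroup.lift_comp_of, hψ]
  exact hχ (by rw [hχψ, MonoidHom.comp_apply, hx, map_one])

theorem lift_surjective (hι : IsGroupCompletion ι) :
    Function.Surjective (GrothendieckGroup.lift ι) := by
  have hquot : QuotientGroup.mk' (GrothendieckGroup.lift ι).range = 1 :=
    hι.hom_ext <| MonoidHom.ext fun m =>
      (QuotientGroup.eq_one_iff _).mpr ⟨GrothendieckGroup.of m, GrothendieckGroup.lift_of ι m⟩
  intro y
  exact (QuotientGroup.eq_one_iff y).mp (DFunLike.congr_fun hquot y)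

theorem isLocalizationMap (hι : IsGroupCompletion ι) : (⊤ : Submonoid M).IsLocalizationMap ι := by
  have := (Localization.monoidOf ⊤).isLocalizationMap.mulEquiv_comp
    (MulEquiv.ofBijective _ ⟨hι.lift_injective, hι.lift_surjective⟩)
  convert this using 1
  funext m
  exact (GrothendieckGroup.lift_of ι m).symm

end IsGroupCompletion

section Pullback

variable {G₁ G₂ N Ngp : Type*} [CommGroup G₁] [CommGroup G₂] [CommMonoid N] [CommGroup Ngp]
  {p : G₁ →* G₂} {i : N →* G₂} {ιN : N →* Ngp} {φ : Ngp →* G₂}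

variable (p ιN) in
def pullbackComparison (hφ : ∀ n, φ (ιN n) = i n) :
    pullbackSubmonoid p i →* pullbackSubgroup p φ :=
  (((MonoidHom.id G₁).prodMap ιN).comp (pullbackSubmonoid p i).subtype).codRestrict _
    fun x => (show p x.1.1 = i x.1.2 from x.2).trans (hφ x.1.2).symm

@[simp]
theorem coe_pullbackComparison (hφ : ∀ n, φ (ιN n) = i n) (x : pullbackSubmonoid p i) :
    (pullbackComparison p ιN hφ x : G₁ × Ngp) = ((x : G₁ × N).1, ιN (x : G₁ × N).2) :=
  rfl

theorem isLocalizationMap_pullbackComparison (hp : Function.Surjective p)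
    (hN : (⊤ : Submonoid N).IsLocalizationMap ιN) (hφ : ∀ n, φ (ιN n) = i n) :
    (⊤ : Submonoid (pullbackSubmonoid p i)).IsLocalizationMap (pullbackComparison p ιN hφ) where
  map_units _ := Group.isUnit _
  surj := by
    rintro ⟨⟨g, y⟩, hy⟩
    obtain ⟨⟨n₁, n₂⟩, hn⟩ := hN.surj y
    obtain ⟨t, ht⟩ := hp (i n₂)
    have ha : p (g * t) = i n₁ := by
      rw [map_mul, ht, show p g = φ y from hy, ← hφ, ← hφ, ← map_mul, hn]
    refine ⟨(⟨(g * t, n₁), ha⟩, ⟨⟨(t, n₂), ht⟩, Submonoid.mem_top _⟩), ?_⟩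
    ext
    · simp
    · simpa using hn
  exists_of_eq := by
    rintro ⟨⟨a₁, a₂⟩, _⟩ ⟨⟨b₁, b₂⟩, _⟩ hab
    simp only [Subtype.ext_iff, coe_pullbackComparison, Prod.mk.injEq] at hab
    obtain ⟨⟨k, _⟩, hk⟩ := hN.exists_of_eq hab.2
    obtain ⟨t, ht⟩ := hp (i k)
    refine ⟨⟨⟨(t, k), ht⟩, Submonoid.mem_top _⟩, ?_⟩
    ext
    · simp [hab.1]
    · exact hk

end Pullback

/-- For a surjective homomorphism of abelian groups `p : G₁ → G₂` and a
monoid homomorphism `i : N → G₂`, the group completion of the pullback monoid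
`G₁ ×_{G₂} N` is naturally isomorphic to the pullback group `G₁ ×_{G₂} N^gp`. -/
theorem stmt_6 {G₁ G₂ N Ngp Pgp : Type*} [CommGroup G₁] [CommGroup G₂] [CommMonoid N]
    [CommGroup Ngp] [CommGroup Pgp]
    (p : G₁ →* G₂) (hp : Function.Surjective p) (i : N →* G₂)
    (ιN : N →* Ngp) (hN : IsGroupCompletion ιN)
    (φ : Ngp →* G₂) (hφ : ∀ n : N, φ (ιN n) = i n)
    (ιP : ↥(pullbackSubmonoid p i) →* Pgp) (hP : IsGroupCompletion ιP) :
    ∃ e : Pgp ≃* ↥(pullbackSubgroup p φ),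
      ∀ x : ↥(pullbackSubmonoid p i),
        ((e (ιP x) : G₁ × Ngp)) = ((x : G₁ × N).1, ιN (x : G₁ × N).2) := by
  let lP : (⊤ : Submonoid (pullbackSubmonoid p i)).LocalizationMap Pgp :=
    ⟨ιP.toMulHom, hP.isLocalizationMap⟩
  let lQ : (⊤ : Submonoid (pullbackSubmonoid p i)).LocalizationMap (pullbackSubgroup p φ) :=
    ⟨(pullbackComparison p ιN hφ).toMulHom,
      isLocalizationMap_pullbackComparison hp hN.isLocalizationMap hφ⟩
  refine ⟨lP.mulEquivOfLocalizations lQ, fun x => ?_⟩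
  rw [← coe_pullbackComparison hφ]
  exact congrArg Subtype.val (lP.lift_eq lQ.map_units x)
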